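/- Let n ≥ 4 and let α, β ∈ K satisfy α ≠ β and α ≠ −β. If T : Mat_n(K) → Mat_n(K) is a bijective K-linear map that stabilizes det^{(α,β)}, then for every pair of indices (i,j), the matrix T(E_{ij}) has exactly one nonzero entry, where E_{ij} denotes the matrix unit with 1 in position (i,j) and 0 elsewhere. -/

import Mathlib

/-
If `C` is supported in a single row or column, then `x ↦ det^{(α,β)}(x C + B)` is affine for every
`B`, because each permutation meets the support of `C` at most once. Since
`det^{(α,β)}(x T(C) + B) = det^{(α,β)}(x C + T⁻¹ B)`, the same holds for `T(C)`. For `B` the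
permutation matrix of `σ` with rows `p, q` removed, the `x²`-coefficient of
`det^{(α,β)}(x T(C) + B)` is `u a + v b`, where `a = T(C)_{p,σp} T(C)_{q,σq}`,
`b = T(C)_{p,σq} T(C)_{q,σp}` and `(u, v)` is `(α, β)` or `(β, α)` according to the parity of `σ`.
As `n ≥ 4`, composing `σ` with a transposition away from `p, q` gives both parities, so
`α a + β b = β a + α b = 0`, and `α ≠ ±β` forces `a = 0`: `T(C)` is again supported in a line.

If `T(E_ij)` had two nonzero entries in a row `r`, the same would force `T(F)` into row `r` for
every line-supported `F` with `E_ij + F` line-supported, in particular for the `n + 1` matrix units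
`E_il` and `E_i'j` (`i' ≠ i`); their images are independent, yet lie in the `n`-dimensional space
of matrices supported in row `r`. Two entries in a column reduce to this by transposition.
-/

open Matrix Finset

noncomputable def evenDet {K : Type*} [Field K] {n : ℕ} (A : Matrix (Fin n) (Fin n) K) : K :=
  ∑ σ ∈ Finset.univ.filter (fun σ : Equiv.Perm (Fin n) => Equiv.Perm.sign σ = 1),
    ∏ i, A i (σ i)

noncomputable def oddDet {K : Type*} [Field K] {n : ℕ} (A : Matrix (Fin n) (Fin n) K) : K :=
  ∑ σ ∈ Finset.univ.filter (fun σ : Equiv.Perm (Fin n) => Equiv.Perm.sign σ = -1),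
    ∏ i, A i (σ i)

/-- The generalized determinant `det^{(α,β)}`. -/
noncomputable def gdet {K : Type*} [Field K] {n : ℕ} (α β : K) (A : Matrix (Fin n) (Fin n) K) : K :=
  α * evenDet A + β * oddDet A

/-- The permutation matrix `P = (δ_{i, σ(j)})`. -/
def permMat (K : Type*) [Field K] {n : ℕ} (σ : Equiv.Perm (Fin n)) : Matrix (Fin n) (Fin n) K :=
  fun i j => if i = σ j then 1 else 0


open Equiv Polynomial

lemma Equiv.Perm.exists_apply_eq_apply_eq {α : Type*} [DecidableEq α] {p q k l : α}
    (hpq : p ≠ q) (hkl : k ≠ l) : ∃ σ : Perm α, σ p = k ∧ σ q = l := by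
  have hk : k ≠ swap p k q := fun h =>
    hpq ((swap p k).injective ((swap_apply_left p k).trans h))
  exact ⟨swap (swap p k q) l * swap p k, by simp [swap_apply_of_ne_of_ne hk hkl], by simp⟩

lemma Equiv.Perm.eq_or_eq_mul_swap_of_forall_apply_eq {α : Type*} [DecidableEq α]
    {σ τ : Perm α} {p q : α} (hpq : p ≠ q) (h : ∀ t, t ≠ p → t ≠ q → τ t = σ t) :
    τ = σ ∨ τ = σ * swap p q := by
  set ρ := σ⁻¹ * τ with hρ
  have hfix : ∀ t, t ≠ p → t ≠ q → ρ t = t := fun t hp hq => by simp [hρ, h t hp hq]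
  have hρp : ρ p = p ∨ ρ p = q := by
    by_contra! h'
    exact h'.1 (ρ.injective (hfix _ h'.1 h'.2))
  have hρq : ρ q = p ∨ ρ q = q := by
    by_contra! h'
    exact h'.2 (ρ.injective (hfix _ h'.1 h'.2))
  suffices ρ = 1 ∨ ρ = swap p q by
    simpa [hρ, inv_mul_eq_one, eq_comm (a := τ), inv_mul_eq_iff_eq_mul] using this
  rcases hρp with hp | hp <;> rcases hρq with hq | hq
  · exact absurd (ρ.injective (hp.trans hq.symm)) hpq
  · left
    ext t
    by_cases htp : t = p <;> by_cases htq : t = q <;> simp_all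
  · right
    ext t
    by_cases htp : t = p <;> by_cases htq : t = q <;> simp_all [swap_apply_of_ne_of_ne]
  · exact absurd (ρ.injective (hp.trans hq.symm)) hpq

/-- Equivalent to the support lying in a single row or a single column. -/
def IsLineSupported {m n R : Type*} [Zero R] (A : Matrix m n R) : Prop :=
  ∀ ⦃p q k l⦄, A p k ≠ 0 → A q l ≠ 0 → p = q ∨ k = l

section LineSupported

variable {m n R : Type*}

lemma isLineSupported_of_row [Zero R] {A : Matrix m n R} (r : m) (hA : ∀ s c, s ≠ r → A s c = 0) :
    IsLineSupported A := fun p q k l hp hq =>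
  Or.inl ((not_imp_comm.mp (hA p k) hp).trans (not_imp_comm.mp (hA q l) hq).symm)

lemma isLineSupported_of_col [Zero R] {A : Matrix m n R} (c : n) (hA : ∀ s k, k ≠ c → A s k = 0) :
    IsLineSupported A := fun p q k l hp hq =>
  Or.inr ((not_imp_comm.mp (hA p k) hp).trans (not_imp_comm.mp (hA q l) hq).symm)

lemma isLineSupported_single [Zero R] [DecidableEq m] [DecidableEq n] (i : m) (j : n) (a : R) :
    IsLineSupported (Matrix.single i j a) :=
  isLineSupported_of_row i fun s c hs => by simp [Ne.symm hs]

lemma IsLineSupported.apply_eq_zero_of_add [AddZeroClass R] {D G : Matrix m n R}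
    (hD : IsLineSupported D) (hG : IsLineSupported G) (hDG : IsLineSupported (D + G))
    {r s : m} {c₁ c₂ c : n} (hc : c₁ ≠ c₂) (h₁ : D r c₁ ≠ 0) (h₂ : D r c₂ ≠ 0) (hs : s ≠ r) :
    G s c = 0 := by
  by_contra hGs
  have hDs : D s c = 0 := by
    by_contra h
    exact hc (((hD h h₁).resolve_left hs).symm.trans ((hD h h₂).resolve_left hs))
  obtain ⟨c', hc', hDc'⟩ : ∃ c', c' ≠ c ∧ D r c' ≠ 0 := by
    by_cases h : c₁ = c
    · exact ⟨c₂, h ▸ hc.symm, h₂⟩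
    · exact ⟨c₁, h, h₁⟩
  have hGr : G r c' = 0 := by
    by_contra h
    exact hc' ((hG h hGs).resolve_left hs.symm)
  have hDGr : (D + G) r c' ≠ 0 := by simpa [hGr] using hDc'
  have hDGs : (D + G) s c ≠ 0 := by simpa [hDs] using hGs
  exact hc' ((hDG hDGr hDGs).resolve_left hs.symm)

end LineSupported

lemma LinearIndependent.card_le_of_forall_row {K ι m n : Type*} [Field K] [Fintype ι]
    [Fintype n] [DecidableEq m] {v : ι → Matrix m n K} (hv : LinearIndependent K v) (r : m)
    (hr : ∀ x s c, s ≠ r → v x s c = 0) : Fintype.card ι ≤ Fintype.card n := by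
  have hv' : v = LinearMap.single K (fun _ : m => n → K) r ∘ fun x => v x r := by
    ext x s c
    by_cases hs : s = r
    · subst hs; simp
    · simp [hs, hr x s c hs]
  have hrow : LinearIndependent K fun x => v x r :=
    LinearIndependent.of_comp (LinearMap.single K (fun _ : m => n → K) r) (hv' ▸ hv)
  simpa using hrow.fintype_card_le_finrank

section GeneralizedDeterminant

variable {K : Type*} {n : ℕ}

def gdetWeight (α β : K) (σ : Perm (Fin n)) : K :=
  if Perm.sign σ = 1 then α else β

lemma gdetWeight_mul_swap (α β : K) (σ : Perm (Fin n)) {x y : Fin n} (hxy : x ≠ y) :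
    gdetWeight α β (σ * swap x y) = gdetWeight β α σ := by
  rcases Int.units_eq_one_or (Perm.sign σ) with h | h <;>
    simp [gdetWeight, Perm.sign_mul, Perm.sign_swap hxy, h]

lemma gdetWeight_add_gdetWeight [AddCommMagma K] (α β : K) (σ : Perm (Fin n)) :
    gdetWeight α β σ + gdetWeight β α σ = α + β := by
  unfold gdetWeight
  split_ifs
  exacts [rfl, add_comm β α]

lemma gdetWeight_ne_gdetWeight {α β : K} (hαβ : α ≠ β) (σ : Perm (Fin n)) :
    gdetWeight α β σ ≠ gdetWeight β α σ := by
  unfold gdetWeight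
  split_ifs
  exacts [hαβ, hαβ.symm]

variable [Field K]

lemma gdet_eq_sum (α β : K) (A : Matrix (Fin n) (Fin n) K) :
    gdet α β A = ∑ σ : Perm (Fin n), gdetWeight α β σ * ∏ i, A i (σ i) := by
  simp only [gdet, evenDet, oddDet, gdetWeight, ite_mul, Finset.sum_ite, Finset.mul_sum,
    ← Int.units_ne_iff_eq_neg]

lemma gdet_transpose (α β : K) (A : Matrix (Fin n) (Fin n) K) : gdet α β Aᵀ = gdet α β A := by
  rw [gdet_eq_sum, gdet_eq_sum]
  refine Fintype.sum_bijective _ inv_involutive.bijective _ _ fun σ => ?_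
  simp only [gdetWeight, Perm.sign_inv]
  congr 1
  exact Fintype.prod_equiv σ _ _ (by simp)

end GeneralizedDeterminant

section Polynomial

variable {K : Type*} [Field K] {n : ℕ}

noncomputable def gdetPoly (α β : K) (D B : Matrix (Fin n) (Fin n) K) : K[X] :=
  ∑ σ : Perm (Fin n), C (gdetWeight α β σ) * ∏ t, (C (D t (σ t)) * X + C (B t (σ t)))

lemma eval_gdetPoly (α β : K) (D B : Matrix (Fin n) (Fin n) K) (x : K) :
    (gdetPoly α β D B).eval x = gdet α β (x • D + B) := by
  simp [gdetPoly, gdet_eq_sum, eval_finsetSum, eval_prod, mul_comm x]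

lemma natDegree_gdetPoly_le_one (α β : K) {D : Matrix (Fin n) (Fin n) K}
    (hD : IsLineSupported D) (B : Matrix (Fin n) (Fin n) K) :
    (gdetPoly α β D B).natDegree ≤ 1 := by
  classical
  refine natDegree_sum_le_of_forall_le _ _ fun σ _ => (natDegree_C_mul_le _ _).trans ?_
  calc (∏ t, (C (D t (σ t)) * X + C (B t (σ t)))).natDegree
      ≤ ∑ t, (C (D t (σ t)) * X + C (B t (σ t))).natDegree := natDegree_prod_le _ _
    _ ≤ ∑ t, if D t (σ t) ≠ 0 then 1 else 0 := by
      refine Finset.sum_le_sum fun t _ => ?_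
      split_ifs with h
      · exact natDegree_linear_le
      · simp [not_not.mp h]
    _ = #{t | D t (σ t) ≠ 0} := Finset.sum_boole _ _
    _ ≤ 1 := Finset.card_le_one.mpr fun a ha b hb => by
      simp only [Finset.mem_filter, Finset.mem_univ, true_and] at ha hb
      exact (hD ha hb).elim id fun h => σ.injective h

def partialPermMatrix (p q : Fin n) (σ : Perm (Fin n)) : Matrix (Fin n) (Fin n) K :=
  Matrix.of fun t m => if t ≠ p ∧ t ≠ q ∧ σ t = m then 1 else 0

lemma coeff_two_prod_partialPermMatrix (D : Matrix (Fin n) (Fin n) K) {p q : Fin n}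
    (hpq : p ≠ q) (σ τ : Perm (Fin n)) :
    (∏ t, (C (D t (τ t)) * X + C (partialPermMatrix p q σ t (τ t)))).coeff 2 =
      D p (τ p) * D q (τ q) * if ∀ t, t ≠ p → t ≠ q → σ t = τ t then 1 else 0 := by
  have hq : q ∈ univ.erase p := by simp [hpq.symm]
  rw [← mul_prod_erase _ _ (mem_univ p), ← mul_prod_erase _ _ hq]
  set g := ∏ t ∈ (univ.erase p).erase q, (C (D t (τ t)) * X + C (partialPermMatrix p q σ t (τ t)))
  have hg : g.coeff 0 = if ∀ t, t ≠ p → t ≠ q → σ t = τ t then 1 else 0 := by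
    have hev : ∀ t ∈ (univ.erase p).erase q,
        eval 0 (C (D t (τ t)) * X + C (partialPermMatrix p q σ t (τ t))) =
          if σ t = τ t then 1 else 0 := fun t ht => by
      simp only [mem_erase] at ht
      simp only [eval_add, eval_mul, eval_C, eval_X, mul_zero, zero_add, partialPermMatrix,
        of_apply]
      simp [ht.1, ht.2.1]
    rw [coeff_zero_eq_eval_zero, eval_prod, Finset.prod_congr rfl hev, prod_boole]
    congr 1
    simp only [mem_erase, mem_univ, and_true, and_imp]
    exact propext (forall_congr' fun t => imp.swap)
  have hB : ∀ {t}, t = p ∨ t = q → partialPermMatrix p q σ t (τ t) = (0 : K) := by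
    rintro t (rfl | rfl) <;> simp [partialPermMatrix]
  rw [hB (.inl rfl), hB (.inr rfl), C_0, add_zero, add_zero,
    show C (D p (τ p)) * X * (C (D q (τ q)) * X * g) = X ^ 2 * (C (D p (τ p) * D q (τ q)) * g) by
      rw [C_mul]; ring, coeff_X_pow_mul', if_pos le_rfl, Nat.sub_self, coeff_C_mul, hg]

lemma coeff_two_gdetPoly_partialPermMatrix (α β : K) (D : Matrix (Fin n) (Fin n) K)
    {p q : Fin n} (hpq : p ≠ q) (σ : Perm (Fin n)) :
    (gdetPoly α β D (partialPermMatrix p q σ)).coeff 2 =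
      gdetWeight α β σ * (D p (σ p) * D q (σ q)) + gdetWeight β α σ * (D p (σ q) * D q (σ p)) := by
  have hτ : σ * swap p q ≠ σ := fun h => hpq (by simpa using (congrArg (· p) h).symm)
  simp only [gdetPoly, finsetSum_coeff, coeff_C_mul, coeff_two_prod_partialPermMatrix D hpq]
  rw [Fintype.sum_eq_add σ _ hτ.symm fun τ hτ => ?_]
  · have hfix : ∀ t, t ≠ p → t ≠ q → σ t = (σ * swap p q) t := fun t hp hq => by
      simp [swap_apply_of_ne_of_ne hp hq]
    rw [if_pos fun _ _ _ => rfl, if_pos hfix, gdetWeight_mul_swap _ _ _ hpq]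
    simp
  · rw [if_neg fun h => ?_, mul_zero, mul_zero]
    rcases Perm.eq_or_eq_mul_swap_of_forall_apply_eq hpq fun t hp hq => (h t hp hq).symm with h | h
    exacts [hτ.1 h, hτ.2 h]

end Polynomial

lemma eq_zero_of_mul_add_mul_eq_zero {K : Type*} [Field K] [NeZero (2 : K)] {u v a b : K}
    (hadd : u + v ≠ 0) (hsub : u ≠ v) (h₁ : u * a + v * b = 0) (h₂ : v * a + u * b = 0) :
    a = 0 := by
  have hsum : a + b = 0 := (mul_eq_zero.mp (by linear_combination h₁ + h₂)).resolve_left hadd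
  have hdiff : a - b = 0 :=
    (mul_eq_zero.mp (by linear_combination h₁ - h₂)).resolve_left (sub_ne_zero.mpr hsub)
  exact (mul_eq_zero.mp (by linear_combination hsum + hdiff : (2 : K) * a = 0)).resolve_left
    two_ne_zero

section Preserver

variable {K : Type*} [Field K] [CharZero K] {n : ℕ} {α β : K}

lemma gdetPoly_map (T : Matrix (Fin n) (Fin n) K ≃ₗ[K] Matrix (Fin n) (Fin n) K)
    (hT : ∀ A, gdet α β (T A) = gdet α β A) (C B : Matrix (Fin n) (Fin n) K) :
    gdetPoly α β (T C) B = gdetPoly α β C (T.symm B) :=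
  Polynomial.funext fun x => by
    rw [eval_gdetPoly, eval_gdetPoly, ← hT (x • C + T.symm B), map_add, map_smul,
      T.apply_symm_apply]

theorem IsLineSupported.map_of_gdet_eq (hn : 4 ≤ n) (hαβ : α ≠ β) (hαβ' : α ≠ -β)
    (T : Matrix (Fin n) (Fin n) K ≃ₗ[K] Matrix (Fin n) (Fin n) K)
    (hT : ∀ A, gdet α β (T A) = gdet α β A) {C : Matrix (Fin n) (Fin n) K}
    (hC : IsLineSupported C) : IsLineSupported (T C) := by
  intro p q k l hpk hql
  by_contra! hne
  have hcoeff : ∀ B, (gdetPoly α β (T C) B).coeff 2 = 0 := fun B => by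
    rw [gdetPoly_map T hT]
    exact coeff_eq_zero_of_natDegree_lt ((natDegree_gdetPoly_le_one α β hC _).trans_lt one_lt_two)
  obtain ⟨σ, hσp, hσq⟩ := Perm.exists_apply_eq_apply_eq hne.1 hne.2
  obtain ⟨a, ha, b, hb, hab⟩ : ∃ a ∈ ({p, q}ᶜ : Finset (Fin n)), ∃ b ∈ ({p, q}ᶜ : Finset (Fin n)),
      a ≠ b := by
    refine one_lt_card.mp ?_
    rw [card_compl, card_pair hne.1, Fintype.card_fin]
    omega
  simp only [mem_compl, mem_insert, mem_singleton, not_or] at ha hb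
  have h₁ := hcoeff (partialPermMatrix p q σ)
  have h₂ := hcoeff (partialPermMatrix p q (σ * swap a b))
  rw [coeff_two_gdetPoly_partialPermMatrix _ _ _ hne.1, hσp, hσq] at h₁
  rw [coeff_two_gdetPoly_partialPermMatrix _ _ _ hne.1, gdetWeight_mul_swap _ _ _ hab,
    gdetWeight_mul_swap _ _ _ hab] at h₂
  simp only [Perm.mul_apply, swap_apply_of_ne_of_ne (Ne.symm ha.1) (Ne.symm hb.1),
    swap_apply_of_ne_of_ne (Ne.symm ha.2) (Ne.symm hb.2), hσp, hσq] at h₂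
  have hadd : gdetWeight α β σ + gdetWeight β α σ ≠ 0 := by
    rw [gdetWeight_add_gdetWeight]
    exact fun h => hαβ' (eq_neg_of_add_eq_zero_left h)
  exact mul_ne_zero hpk hql
    (eq_zero_of_mul_add_mul_eq_zero hadd (gdetWeight_ne_gdetWeight hαβ σ) h₁ h₂)

theorem map_single_apply_eq_zero_of_same_row (hn : 4 ≤ n) (hαβ : α ≠ β) (hαβ' : α ≠ -β)
    (T : Matrix (Fin n) (Fin n) K ≃ₗ[K] Matrix (Fin n) (Fin n) K)
    (hT : ∀ A, gdet α β (T A) = gdet α β A) {i j r c₁ c₂ : Fin n} (hc : c₁ ≠ c₂)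
    (h₁ : T (single i j 1) r c₁ ≠ 0) : T (single i j 1) r c₂ = 0 := by
  by_contra h₂
  have hline (A) (hA : IsLineSupported A) : IsLineSupported (T A) :=
    hA.map_of_gdet_eq hn hαβ hαβ' T hT
  have hrow (A) (hA : IsLineSupported A) (hsum : IsLineSupported (single i j 1 + A)) (s c)
      (hs : s ≠ r) : T A s c = 0 :=
    (hline _ (isLineSupported_single i j 1)).apply_eq_zero_of_add (hline A hA)
      (by simpa using hline _ hsum) hc h₁ h₂ hs
  have : Nontrivial (Fin n) := Fin.nontrivial_iff_two_le.mpr (by omega)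
  obtain ⟨i', hi'⟩ := exists_ne i
  let g : Option (Fin n) → Fin n × Fin n := fun x => x.elim (i', j) (i, ·)
  have hg : g.Injective := by
    rintro (_ | _) (_ | _) h <;> simp_all [g]
  have hindep :=
    ((stdBasis K (Fin n) (Fin n)).linearIndependent.comp g hg).map' T.toLinearMap T.ker
  have hsum : ∀ x, IsLineSupported (single i j (1 : K) + single (g x).1 (g x).2 1)
    | none => isLineSupported_of_col j fun s k hk => by simp [g, Ne.symm hk]
    | some l => isLineSupported_of_row i fun s k hs => by simp [g, Ne.symm hs]
  simpa using hindep.card_le_of_forall_row r fun x s c hs => by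
    change T (stdBasis K _ _ ((g x).1, (g x).2)) s c = 0
    rw [stdBasis_eq_single]
    exact hrow _ (isLineSupported_single _ _ _) (hsum x) s c hs

theorem map_single_apply_eq_zero_of_same_col (hn : 4 ≤ n) (hαβ : α ≠ β) (hαβ' : α ≠ -β)
    (T : Matrix (Fin n) (Fin n) K ≃ₗ[K] Matrix (Fin n) (Fin n) K)
    (hT : ∀ A, gdet α β (T A) = gdet α β A) {i j r₁ r₂ c : Fin n} (hr : r₁ ≠ r₂)
    (h₁ : T (single i j 1) r₁ c ≠ 0) : T (single i j 1) r₂ c = 0 := by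
  let e := transposeLinearEquiv (Fin n) (Fin n) K K
  have hT' (A) : gdet α β ((e.symm.trans (T.trans e)) A) = gdet α β A := by
    simp [e, gdet_transpose, hT]
  have key := map_single_apply_eq_zero_of_same_row hn hαβ hαβ' _ hT' (i := j) (j := i) (r := c) hr
  simpa [e] using key (by simpa [e] using h₁)

end Preserver

theorem image_of_matrix_unit_has_unique_nonzero_entry {K : Type*} [Field K] [CharZero K]
    {n : ℕ} (hn : 4 ≤ n) (α β : K) (hαβ : α ≠ β) (hαβ' : α ≠ -β)
    (T : Matrix (Fin n) (Fin n) K ≃ₗ[K] Matrix (Fin n) (Fin n) K)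
    (hT : ∀ A, gdet α β (T A) = gdet α β A) :
    ∀ i j : Fin n, ∃! p : Fin n × Fin n, T (Matrix.single i j (1 : K)) p.1 p.2 ≠ 0 := by
  intro i j
  have hline := (isLineSupported_single i j (1 : K)).map_of_gdet_eq hn hαβ hαβ' T hT
  obtain ⟨r, c, hrc⟩ : ∃ r c, T (single i j 1) r c ≠ 0 := by
    by_contra! h
    simpa using congr_fun₂ (T.map_eq_zero_iff.mp (Matrix.ext h)) i j
  refine ⟨(r, c), hrc, fun ⟨s, m⟩ hsm => ?_⟩
  rcases hline hsm hrc with rfl | rfl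
  · refine Prod.ext rfl (not_not.mp fun hmc => hsm ?_)
    exact map_single_apply_eq_zero_of_same_row hn hαβ hαβ' T hT (Ne.symm hmc) hrc
  · refine Prod.ext (not_not.mp fun hsr => hsm ?_) rfl
    exact map_single_apply_eq_zero_of_same_col hn hαβ hαβ' T hT (Ne.symm hsr) hrc
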